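/- Let π be a uniformizer of F and let u ∈ 𝒪^× be a unit whose residue res(u) is not a square in 𝔽. Then for all a, b ∈ F^×, the product {a}·{b} in k^M(F) equals either 0 or {u}·{π}; together with the nonvanishing of {u}·{π}, this shows that the second Milnor K-group k^M_2(F) has exactly two elements. -/

import Mathlib

/-!
Write `a ∈ F^×` as `π^n w` with `w` a unit. As the residue characteristic is odd, Hensel's lemma
makes a unit a square exactly when its residue is, so `w` is a square or `u` times a square and
`{a} ∈ ℤ{u} + ℤ{π}`. Symbols commute, `{π}{π} = {π}{-1}`, and `{u}{u} = 0` because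
`u x² + u y² = 1` is solvable in `𝔽` and lifts to a Steinberg relation; hence every `{a}{b}` is a
multiple of `{u}{π}`, and `2 = 0`. Finally `{u}{π} ≠ 0` is detected by the tame symbol, realised
as a ring homomorphism from `k^M(F)` to `4 × 4` matrices over `𝔽₂`.
-/

/-- A nondyadic `p`-adic field packaged as data: a field `F` of characteristic zero,
complete with respect to a surjective discrete valuation `v : Fˣ → ℤ`, with valuation
ring `O`, residue field `K` (finite of odd cardinality in applications), and residue
(quotient) map `res : O →+* K` whose kernel is the maximal ideal `𝔪 = {x : v x ≥ 1}`. -/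
structure PadicData (F K : Type) [Field F] [Field K] where
  v : Fˣ → ℤ
  v_mul : ∀ x y : Fˣ, v (x * y) = v x + v y
  v_surj : Function.Surjective v
  v_ultra : ∀ (x y : Fˣ) (h : (x : F) + (y : F) ≠ 0),
      min (v x) (v y) ≤ v (Units.mk0 ((x : F) + (y : F)) h)
  O : Subring F
  mem_O : ∀ x : F, x ∈ O ↔ ∀ h : x ≠ 0, 0 ≤ v (Units.mk0 x h)
  res : O →+* K
  res_surj : Function.Surjective res
  res_eq_zero : ∀ x : O, res x = 0 ↔ ∀ h : (x : F) ≠ 0, 1 ≤ v (Units.mk0 (x : F) h)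
  complete : ∀ f : ℕ → F,
      (∀ N : ℤ, ∃ M : ℕ, ∀ m, M ≤ m → ∀ n, M ≤ n → ∀ h : f m - f n ≠ 0,
        N ≤ v (Units.mk0 (f m - f n) h)) →
      ∃ a : F, ∀ N : ℤ, ∃ M : ℕ, ∀ n, M ≤ n → ∀ h : f n - a ≠ 0,
        N ≤ v (Units.mk0 (f n - a) h)
/-- The defining relations of mod 2 Milnor K-theory on the tensor algebra
`T(F^×)` (over `ℤ`, with `F^×` written additively): the Steinberg elements
`{a}·{1−a}` for `a ∈ F^× \ {1}` are set to `0`, and `2·1` is set to `0`.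
Quotienting by `MilnorRel` realizes the quotient by the two-sided ideal `J`
generated by these elements. -/
inductive MilnorRel (F : Type) [Field F] :
    TensorAlgebra ℤ (Additive Fˣ) → TensorAlgebra ℤ (Additive Fˣ) → Prop
  | steinberg (a : Fˣ) (h : (1 : F) - (a : F) ≠ 0) :
      MilnorRel F
        (TensorAlgebra.ι ℤ (Additive.ofMul a) *
          TensorAlgebra.ι ℤ (Additive.ofMul (Units.mk0 ((1 : F) - (a : F)) h))) 0
  | mod2 : MilnorRel F (2 : TensorAlgebra ℤ (Additive Fˣ)) 0

/-- Mod 2 Milnor K-theory `k^M(F) = T(F^×)/J`. -/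
abbrev MilnorK (F : Type) [Field F] := RingQuot (MilnorRel F)

/-- The degree-one class `{a}` of `a ∈ F^×` in mod 2 Milnor K-theory. -/
noncomputable def kcls {F : Type} [Field F] (a : Fˣ) : MilnorK F :=
  RingQuot.mkRingHom (MilnorRel F) (TensorAlgebra.ι ℤ (Additive.ofMul a))

lemma Units.isSquare_of_isSquare_val {G₀ : Type*} [GroupWithZero G₀] {w : G₀ˣ}
    (h : IsSquare (w : G₀)) : IsSquare w := by
  obtain ⟨r, hr⟩ := h
  have hr0 : r ≠ 0 := by rintro rfl; simp at hr
  exact ⟨Units.mk0 r hr0, Units.ext (by simpa using hr)⟩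

lemma FiniteField.isSquare_mul_iff {K : Type*} [Field K] [Fintype K] {x y : K} (hx : x ≠ 0)
    (hy : y ≠ 0) : IsSquare (x * y) ↔ (IsSquare x ↔ IsSquare y) := by
  classical
  rw [← quadraticChar_one_iff_isSquare hx, ← quadraticChar_one_iff_isSquare hy,
    ← quadraticChar_one_iff_isSquare (mul_ne_zero hx hy), map_mul]
  rcases quadraticChar_dichotomy hx with h | h <;>
    rcases quadraticChar_dichotomy hy with h' | h' <;> simp [h, h']

lemma FiniteField.ringChar_ne_two_of_odd_card {K : Type*} [Field K] [Fintype K]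
    (h : Odd (Fintype.card K)) : ringChar K ≠ 2 := fun hK => by
  have := FiniteField.even_card_of_char_two hK
  rw [Nat.odd_iff] at h
  omega

lemma FiniteField.exists_mul_sq_add_mul_sq_eq_one {K : Type*} [Field K] [Fintype K]
    (hK : ringChar K ≠ 2) {c : K} (hc : ¬IsSquare c) :
    ∃ x y : K, x ≠ 0 ∧ y ≠ 0 ∧ c * x ^ 2 + c * y ^ 2 = 1 := by
  have hc0 : c ≠ 0 := by rintro rfl; exact hc IsSquare.zero
  obtain ⟨x, y, hxy⟩ := FiniteField.exists_root_sum_quadratic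
    (f := .X ^ 2) (g := .X ^ 2 - .C c⁻¹) (Polynomial.degree_X_pow 2)
    (Polynomial.degree_X_pow_sub_C (by decide) _) (FiniteField.odd_card_of_char_ne_two hK)
  have hsum : c * x ^ 2 + c * y ^ 2 = 1 := by
    simp only [Polynomial.eval_pow, Polynomial.eval_X, Polynomial.eval_sub,
      Polynomial.eval_C] at hxy
    field_simp at hxy
    linear_combination hxy
  have hsq {z : K} (hz : c * z ^ 2 = 1) : IsSquare c := by
    have hz0 : z ≠ 0 := by rintro rfl; simp at hz
    exact ⟨z⁻¹, by field_simp; linear_combination hz⟩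
  refine ⟨x, y, ?_, ?_, hsum⟩ <;> rintro rfl <;> exact hc (hsq (by simpa using hsum))

lemma AddSubgroup.coe_zmultiples_of_two_nsmul_eq_zero {G : Type*} [AddGroup G] {x : G}
    (hx : 2 • x = 0) : (AddSubgroup.zmultiples x : Set G) = {0, x} := by
  ext z
  simp only [SetLike.mem_coe, AddSubgroup.mem_zmultiples_iff, Set.mem_insert_iff,
    Set.mem_singleton_iff]
  constructor
  · rintro ⟨k, rfl⟩
    have hx' : (2 : ℤ) • x = 0 := by rw [two_zsmul, ← two_nsmul, hx]
    rw [← Int.emod_add_mul_ediv k 2, add_zsmul, mul_zsmul', hx', zsmul_zero, add_zero]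
    rcases Int.emod_two_eq_zero_or_one k with h | h <;> simp [h]
  · rintro (rfl | rfl)
    exacts [⟨0, zero_zsmul _⟩, ⟨1, one_zsmul _⟩]

lemma zsmul_add_zsmul_mul_mem_zmultiples {R : Type*} [Ring R] {x y : R} (hxx : x * x = 0)
    (hyx : y * x = x * y) (hyy : y * y ∈ AddSubgroup.zmultiples (x * y)) (m n m' n' : ℤ) :
    (m • x + n • y) * (m' • x + n' • y) ∈ AddSubgroup.zmultiples (x * y) := by
  obtain ⟨k, hk⟩ := hyy
  refine ⟨m * n' + n * m' + n * n' * k, ?_⟩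
  simp only [add_mul, mul_add, smul_mul_smul, hxx, hyx, ← hk, smul_zero, zero_add, add_smul,
    mul_smul]
  abel

section MilnorK

variable {F : Type} [Field F]

noncomputable def kclsHom : Additive Fˣ →+ MilnorK F :=
  (RingQuot.mkRingHom (MilnorRel F)).toAddMonoidHom.comp (TensorAlgebra.ι ℤ).toAddMonoidHom

lemma kcls_mul (a b : Fˣ) : kcls (a * b) = kcls a + kcls b :=
  map_add kclsHom (.ofMul a) (.ofMul b)

lemma kcls_one : kcls (1 : Fˣ) = 0 := map_zero (kclsHom (F := F))

lemma kcls_zpow (a : Fˣ) (n : ℤ) : kcls (a ^ n) = n • kcls a :=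
  map_zsmul kclsHom n (.ofMul a)

lemma MilnorK.two_eq_zero : (2 : MilnorK F) = 0 := by
  rw [← map_ofNat (RingQuot.mkRingHom (MilnorRel F)) 2]
  simpa using RingQuot.mkRingHom_rel (MilnorRel.mod2 (F := F))

lemma MilnorK.add_self (z : MilnorK F) : z + z = 0 := by
  rw [← two_mul, MilnorK.two_eq_zero, zero_mul]

lemma MilnorK.eq_of_add_eq_zero {z w : MilnorK F} (h : z + w = 0) : z = w := by
  rw [eq_neg_of_add_eq_zero_left h, neg_eq_iff_add_eq_zero, MilnorK.add_self]

lemma kcls_mul_self (s : Fˣ) : kcls (s * s) = 0 := by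
  rw [kcls_mul, MilnorK.add_self]

lemma kcls_inv (a : Fˣ) : kcls a⁻¹ = kcls a :=
  MilnorK.eq_of_add_eq_zero (by rw [← kcls_mul, inv_mul_cancel, kcls_one])

lemma kcls_mul_kcls_eq_zero_of_add_eq_one {a b : Fˣ} (h : (a : F) + b = 1) :
    kcls a * kcls b = 0 := by
  have hb : (1 : F) - a ≠ 0 := by rw [← h, add_sub_cancel_left]; exact b.ne_zero
  obtain rfl : b = Units.mk0 (1 - (a : F)) hb := Units.ext (by rw [Units.val_mk0, ← h]; ring)
  have h := RingQuot.mkRingHom_rel (MilnorRel.steinberg a hb)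
  rwa [map_mul, map_zero] at h

lemma kcls_mul_kcls_neg (a : Fˣ) : kcls a * kcls (-a) = 0 := by
  rcases eq_or_ne a 1 with rfl | ha
  · rw [kcls_one, zero_mul]
  have h1 : (1 : F) - a ≠ 0 := sub_ne_zero.2 fun h => ha (Units.val_eq_one.1 h.symm)
  have h2 : (1 : F) - (a⁻¹ : Fˣ) ≠ 0 :=
    sub_ne_zero.2 fun h => ha (inv_eq_one.1 (Units.val_eq_one.1 h.symm))
  -- a quotient of Steinberg partners of `a` and of `a⁻¹`
  have hfac : -a = Units.mk0 _ h1 * (Units.mk0 _ h2)⁻¹ := by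
    have ha0 := a.ne_zero
    ext
    simp only [Units.val_neg, Units.val_mul, Units.val_inv_eq_inv_val, Units.val_mk0] at h2 ⊢
    rw [eq_mul_inv_iff_mul_eq₀ h2]
    field_simp
    ring
  rw [hfac, kcls_mul, kcls_inv, mul_add,
    kcls_mul_kcls_eq_zero_of_add_eq_one (b := Units.mk0 _ h1) (by simp), zero_add, ← kcls_inv a]
  exact kcls_mul_kcls_eq_zero_of_add_eq_one (by simp)

lemma kcls_mul_kcls_self (a : Fˣ) : kcls a * kcls a = kcls a * kcls (-1) := by
  refine MilnorK.eq_of_add_eq_zero ?_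
  rw [← mul_add, add_comm, ← kcls_mul, neg_one_mul, kcls_mul_kcls_neg]

lemma kcls_mul_comm (a b : Fˣ) : kcls a * kcls b = kcls b * kcls a := by
  refine MilnorK.eq_of_add_eq_zero ?_
  have h := kcls_mul_kcls_neg (a * b)
  rw [← neg_one_mul, kcls_mul, kcls_mul, kcls_mul] at h
  have hself (x : Fˣ) : kcls x * kcls (-1) + kcls x * kcls x = 0 := by
    rw [kcls_mul_kcls_self, MilnorK.add_self]
  calc kcls a * kcls b + kcls b * kcls a
      = (kcls a * kcls (-1) + kcls a * kcls a) + (kcls b * kcls (-1) + kcls b * kcls b)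
        + (kcls a * kcls b + kcls b * kcls a) := by rw [hself, hself, zero_add, zero_add]
    _ = 0 := by rw [← h]; noncomm_ring

noncomputable def MilnorK.lift {A : Type*} [Ring A] (f : Additive Fˣ →+ A) (h2 : (2 : A) = 0)
    (hf : ∀ a b : Fˣ, (a : F) + b = 1 → f (.ofMul a) * f (.ofMul b) = 0) : MilnorK F →+* A :=
  RingQuot.lift ⟨(TensorAlgebra.lift ℤ f.toIntLinearMap).toRingHom, fun x y h => by
    cases h with
    | steinberg a h => simpa [TensorAlgebra.lift_ι_apply] using hf _ _ (by simp)
    | mod2 => simpa [map_ofNat] using h2⟩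

lemma MilnorK.lift_kcls {A : Type*} [Ring A] (f : Additive Fˣ →+ A) (h2 : (2 : A) = 0)
    (hf : ∀ a b : Fˣ, (a : F) + b = 1 → f (.ofMul a) * f (.ofMul b) = 0) (a : Fˣ) :
    MilnorK.lift f h2 hf (kcls a) = f (.ofMul a) := by
  simp [MilnorK.lift, kcls, RingQuot.lift_mkRingHom_apply, TensorAlgebra.lift_ι_apply]

end MilnorK

noncomputable def sqrtIter {F : Type} [Field F] (y : F) : ℕ → F
  | 0 => 1
  | k + 1 => sqrtIter y k - (sqrtIter y k ^ 2 - y) / 2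

namespace PadicData

variable {F K : Type} [Field F] [Field K] (D : PadicData F K)

def vHom : Fˣ →* Multiplicative ℤ :=
  MonoidHom.mk' (fun x => .ofAdd (D.v x)) fun x y => by rw [D.v_mul, ofAdd_add]

lemma v_one : D.v 1 = 0 := congrArg Multiplicative.toAdd D.vHom.map_one

lemma v_zpow (x : Fˣ) (n : ℤ) : D.v (x ^ n) = n * D.v x :=
  congrArg Multiplicative.toAdd (map_zpow D.vHom x n)

lemma v_inv (x : Fˣ) : D.v x⁻¹ = -D.v x :=
  congrArg Multiplicative.toAdd (map_inv D.vHom x)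

lemma v_neg_one : D.v (-1) = 0 := by
  have h := D.v_mul (-1) (-1)
  rw [neg_one_mul, neg_neg, v_one] at h
  omega

open Classical in
noncomputable def val : AddValuation F (WithTop ℤ) :=
  AddValuation.of (fun x => if h : x = 0 then ⊤ else (D.v (Units.mk0 x h) : WithTop ℤ))
    (by simp)
    (by simp [Units.mk0_one, D.v_one])
    (fun x y => by
      by_cases hx : x = 0; · simp [hx]
      by_cases hy : y = 0; · simp [hy]
      by_cases hxy : x + y = 0; · simp [hxy]
      simp only [hx, hy, hxy, dite_false, ← WithTop.coe_min, WithTop.coe_le_coe]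
      simpa using D.v_ultra (Units.mk0 x hx) (Units.mk0 y hy) hxy)
    (fun x y => by
      by_cases hx : x = 0; · simp [hx]
      by_cases hy : y = 0; · simp [hy]
      simp only [mul_eq_zero, hx, hy, or_self, dite_false, Units.mk0_mul, D.v_mul,
        WithTop.coe_add])

lemma val_units (x : Fˣ) : D.val x = D.v x := by
  simp [val, x.ne_zero]

lemma val_units_eq_zero_iff {w : Fˣ} : D.val w = 0 ↔ D.v w = 0 := by
  rw [D.val_units, WithTop.coe_eq_zero]

lemma le_val_iff (N : ℤ) (x : F) :
    (N : WithTop ℤ) ≤ D.val x ↔ ∀ h : x ≠ 0, N ≤ D.v (Units.mk0 x h) := by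
  by_cases hx : x = 0 <;> simp [val, hx]

lemma eq_zero_of_forall_le_val {x : F} (h : ∀ n : ℕ, ((n : ℤ) : WithTop ℤ) ≤ D.val x) :
    x = 0 := by
  by_contra hx
  have := (D.le_val_iff _ x).1 (h (D.v (Units.mk0 x hx) + 1).toNat) hx
  omega

lemma mem_O_iff {x : F} : x ∈ D.O ↔ 0 ≤ D.val x := by
  rw [D.mem_O, ← WithTop.coe_zero, D.le_val_iff]

lemma mem_O_of_val_sub_nonneg {x c : F} (hc : c ∈ D.O) (h : 0 ≤ D.val (x - c)) : x ∈ D.O := by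
  simpa using add_mem (D.mem_O_iff.2 h) hc

lemma coe_mem_O {w : Fˣ} (hw : D.v w = 0) : (w : F) ∈ D.O :=
  D.mem_O_iff.2 (by simp [D.val_units, hw])

lemma val_eq_zero_of_mem_O {x : F} (hx : x ∈ D.O) (h : D.val x < 1) : D.val x = 0 := by
  have h0 := D.mem_O_iff.1 hx
  generalize D.val x = y at *
  cases y with
  | top => simp at h
  | coe n => norm_cast at *; omega

lemma le_val_sub_of_le {f : ℕ → F}
    (hf : ∀ n : ℕ, ((n : ℤ) : WithTop ℤ) ≤ D.val (f (n + 1) - f n)) {n m : ℕ} (hnm : n ≤ m) :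
    ((n : ℤ) : WithTop ℤ) ≤ D.val (f m - f n) := by
  induction m, hnm using Nat.le_induction with
  | base => simp
  | succ m hnm ih =>
    calc ((n : ℤ) : WithTop ℤ) ≤ min (D.val (f (m + 1) - f m)) (D.val (f m - f n)) :=
          le_min ((WithTop.coe_le_coe.2 (by omega)).trans (hf m)) ih
      _ ≤ D.val (f (m + 1) - f n) := by
          simpa using D.val.map_add (f (m + 1) - f m) (f m - f n)

lemma exists_le_val_sub_lim (f : ℕ → F)
    (hf : ∀ n : ℕ, ((n : ℤ) : WithTop ℤ) ≤ D.val (f (n + 1) - f n)) :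
    ∃ a, ∀ n : ℕ, ((n : ℤ) : WithTop ℤ) ≤ D.val (f n - a) := by
  have hcauchy (n m : ℕ) : ((min n m : ℕ) : WithTop ℤ) ≤ D.val (f m - f n) := by
    rcases le_total n m with h | h
    · simpa [h] using D.le_val_sub_of_le hf h
    · simpa [h, D.val.map_sub_swap] using D.le_val_sub_of_le hf h
  obtain ⟨a, ha⟩ := D.complete f fun N => ⟨N.toNat, fun m hm n hn =>
    (D.le_val_iff N _).1 ((WithTop.coe_le_coe.2 (by omega)).trans (hcauchy n m))⟩
  refine ⟨a, fun n => ?_⟩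
  obtain ⟨M, hM⟩ := ha n
  have hlim := (D.le_val_iff n _).2 (hM (max M n) (le_max_left _ _))
  calc ((n : ℤ) : WithTop ℤ) ≤ min (D.val (f (max M n) - a)) (D.val (f (max M n) - f n)) :=
        le_min hlim (by simpa using hcauchy n (max M n))
    _ ≤ D.val (f n - a) := by
        simpa using D.val.map_sub (f (max M n) - a) (f (max M n) - f n)

open Classical in
noncomputable def rs (x : F) : K := if hx : x ∈ D.O then D.res ⟨x, hx⟩ else 0

lemma rs_of_mem {x : F} (hx : x ∈ D.O) : D.rs x = D.res ⟨x, hx⟩ := dif_pos hx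

lemma rs_one : D.rs 1 = 1 := by
  rw [D.rs_of_mem (one_mem _)]
  exact map_one D.res

lemma rs_mul {x y : F} (hx : x ∈ D.O) (hy : y ∈ D.O) : D.rs (x * y) = D.rs x * D.rs y := by
  rw [D.rs_of_mem hx, D.rs_of_mem hy, D.rs_of_mem (mul_mem hx hy), ← map_mul]
  rfl

lemma rs_sub {x y : F} (hx : x ∈ D.O) (hy : y ∈ D.O) : D.rs (x - y) = D.rs x - D.rs y := by
  rw [D.rs_of_mem hx, D.rs_of_mem hy, D.rs_of_mem (sub_mem hx hy), ← map_sub]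
  rfl

lemma rs_eq_zero_iff {x : F} (hx : x ∈ D.O) : D.rs x = 0 ↔ 1 ≤ D.val x := by
  rw [D.rs_of_mem hx, D.res_eq_zero, ← WithTop.coe_one, D.le_val_iff]

lemma val_eq_zero_iff_rs_ne_zero {x : F} (hx : x ∈ D.O) : D.val x = 0 ↔ D.rs x ≠ 0 := by
  rw [ne_eq, D.rs_eq_zero_iff hx]
  exact ⟨fun h => by simp [h], fun h => D.val_eq_zero_of_mem_O hx (not_le.1 h)⟩

lemma rs_ne_zero {w : Fˣ} (hw : D.v w = 0) : D.rs w ≠ 0 :=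
  (D.val_eq_zero_iff_rs_ne_zero (D.coe_mem_O hw)).1 (D.val_units_eq_zero_iff.2 hw)

lemma exists_rs_eq (d : K) : ∃ c ∈ D.O, D.rs c = d := by
  obtain ⟨c, rfl⟩ := D.res_surj d
  exact ⟨c, c.2, D.rs_of_mem c.2⟩

lemma exists_v_eq_zero_rs_eq {d : K} (hd : d ≠ 0) : ∃ w : Fˣ, D.v w = 0 ∧ D.rs w = d := by
  obtain ⟨c, hcO, rfl⟩ := D.exists_rs_eq d
  have hc0 : c ≠ 0 := by rintro rfl; exact hd (by rw [D.rs_of_mem hcO]; exact map_zero D.res)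
  refine ⟨Units.mk0 c hc0, D.val_units_eq_zero_iff.1 ?_, rfl⟩
  simpa [D.val_eq_zero_iff_rs_ne_zero hcO] using hd

lemma val_two (hK : ringChar K ≠ 2) : D.val 2 = 0 := by
  have h2 : (2 : F) ∈ D.O := ofNat_mem D.O 2
  rw [D.val_eq_zero_iff_rs_ne_zero h2, D.rs_of_mem h2,
    show (⟨2, h2⟩ : D.O) = 2 from rfl, map_ofNat]
  exact Ring.two_ne_zero hK

lemma sqrtIter_spec (hK : ringChar K ≠ 2) {y : F} (hy : 1 ≤ D.val (y - 1)) (k : ℕ) :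
    1 ≤ D.val (sqrtIter y k - 1) ∧
      (((k + 1 : ℕ) : ℤ) : WithTop ℤ) ≤ D.val (sqrtIter y k ^ 2 - y) := by
  induction k with
  | zero => simpa [sqrtIter, D.val.map_sub_swap 1 y] using hy
  | succ k ih =>
    obtain ⟨h1, hk⟩ := ih
    set s := sqrtIter y k
    set δ := (s ^ 2 - y) / 2 with hδ
    have hvδ : (((k + 1 : ℕ) : ℤ) : WithTop ℤ) ≤ D.val δ := by
      rwa [hδ, D.val.map_div, D.val_two hK, sub_zero]
    have hstep : sqrtIter y (k + 1) = s - δ := rfl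
    have h2δ : 2 * δ = s ^ 2 - y := mul_div_cancel₀ _ fun h => by simpa [h] using D.val_two hK
    clear_value δ
    have hid : (s - δ) ^ 2 - y = δ * (δ - 2 * (s - 1)) := by linear_combination -h2δ
    have h1' : 1 ≤ D.val (δ - 2 * (s - 1)) := by
      refine D.val.map_le_sub ((WithTop.coe_le_coe.2 (by omega)).trans hvδ) ?_
      rw [D.val.map_mul, D.val_two hK, zero_add]
      exact h1
    refine ⟨?_, ?_⟩
    · rw [hstep, sub_right_comm]
      exact D.val.map_le_sub h1 ((WithTop.coe_le_coe.2 (by omega)).trans hvδ)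
    · rw [hstep, hid, D.val.map_mul]
      calc (((k + 1 + 1 : ℕ) : ℤ) : WithTop ℤ) = (((k + 1 : ℕ) : ℤ) : WithTop ℤ) + 1 := by
            push_cast; rfl
        _ ≤ _ := add_le_add hvδ h1'

lemma isSquare_of_one_le_val_sub_one (hK : ringChar K ≠ 2) {y : F} (hy : 1 ≤ D.val (y - 1)) :
    IsSquare y := by
  have hspec := D.sqrtIter_spec hK hy
  obtain ⟨a, ha⟩ := D.exists_le_val_sub_lim (sqrtIter y) fun n => by
    rw [show sqrtIter y (n + 1) - sqrtIter y n = -((sqrtIter y n ^ 2 - y) / 2) by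
        simp [sqrtIter], D.val.map_neg, D.val.map_div, D.val_two hK, sub_zero]
    exact (WithTop.coe_le_coe.2 (by omega)).trans (hspec n).2
  have hmem (n : ℕ) : sqrtIter y n ∈ D.O :=
    D.mem_O_of_val_sub_nonneg (one_mem _) (zero_le_one.trans (hspec n).1)
  have haO : a ∈ D.O :=
    D.mem_O_of_val_sub_nonneg (hmem 0) (by simpa [D.val.map_sub_swap] using ha 0)
  refine ⟨a, sub_eq_zero.1 (D.eq_zero_of_forall_le_val fun n => ?_)⟩
  rw [show y - a * a = (sqrtIter y n - a) * (sqrtIter y n + a) - (sqrtIter y n ^ 2 - y) by ring]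
  refine D.val.map_le_sub ?_ ((WithTop.coe_le_coe.2 (by omega)).trans (hspec n).2)
  rw [D.val.map_mul]
  exact le_add_of_le_of_nonneg (ha n) (D.mem_O_iff.1 (add_mem (hmem n) haO))

lemma isSquare_of_isSquare_rs (hK : ringChar K ≠ 2) {w : Fˣ} (hw : D.v w = 0)
    (h : IsSquare (D.rs w)) : IsSquare w := by
  have hwO := D.coe_mem_O hw
  obtain ⟨d, hd⟩ := h
  obtain ⟨c, hcO, rfl⟩ := D.exists_rs_eq d
  have hc : D.val c = 0 :=
    (D.val_eq_zero_iff_rs_ne_zero hcO).2 fun h0 => D.rs_ne_zero hw (by rw [hd, h0, mul_zero])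
  have hc0 : c ≠ 0 := by rintro rfl; simp at hc
  have hdiff : 1 ≤ D.val (w - c * c) := by
    rw [← D.rs_eq_zero_iff (sub_mem hwO (mul_mem hcO hcO)), D.rs_sub hwO (mul_mem hcO hcO),
      D.rs_mul hcO hcO, hd, sub_self]
  obtain ⟨r, hr⟩ := D.isSquare_of_one_le_val_sub_one hK (y := w / (c * c)) (by
    rwa [div_sub_one (mul_ne_zero hc0 hc0), D.val.map_div, D.val.map_mul, hc, add_zero,
      sub_zero])
  refine Units.isSquare_of_isSquare_val ⟨c * r, ?_⟩
  rw [div_eq_iff (mul_ne_zero hc0 hc0)] at hr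
  rw [hr]
  ring

variable {π : Fˣ}

noncomputable def unitPart (π a : Fˣ) : Fˣ := a * π ^ (-D.v a)

lemma v_unitPart (hπ : D.v π = 1) (a : Fˣ) : D.v (D.unitPart π a) = 0 := by
  rw [unitPart, D.v_mul, D.v_zpow, hπ]
  ring

lemma unitPart_mul (a b : Fˣ) : D.unitPart π (a * b) = D.unitPart π a * D.unitPart π b := by
  rw [unitPart, unitPart, unitPart, D.v_mul, neg_add, zpow_add, mul_mul_mul_comm]

lemma unitPart_of_v_eq_zero {a : Fˣ} (ha : D.v a = 0) : D.unitPart π a = a := by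
  rw [unitPart, ha, neg_zero, zpow_zero, mul_one]

def nu (a : Fˣ) : ZMod 2 := D.v a

noncomputable def eps (π a : Fˣ) : ZMod 2 :=
  open Classical in if IsSquare (D.rs (D.unitPart π a)) then 0 else 1

/-- The tame symbol `(-1)^{v a v b} a^{v b} / b^{v a}` of `a, b`, read off in `𝔽^×/𝔽^×²`. -/
noncomputable def tame (π a b : Fˣ) : ZMod 2 :=
  D.nu a * D.eps π b + D.eps π a * D.nu b + D.eps π (-1) * D.nu a * D.nu b

/-- A model of `{a}` in which the product of two degree-one classes is their tame symbol. -/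
noncomputable def symbolMatrix (π a : Fˣ) : Matrix (Fin 4) (Fin 4) (ZMod 2) :=
  !![0, D.eps π a, D.nu a, 0;
     0, 0, 0, D.nu a;
     0, 0, 0, D.eps π a + D.eps π (-1) * D.nu a;
     0, 0, 0, 0]

lemma symbolMatrix_mul (a b : Fˣ) :
    D.symbolMatrix π a * D.symbolMatrix π b = Matrix.single 0 3 (D.tame π a b) := by
  ext i j
  fin_cases i <;> fin_cases j <;> simp [symbolMatrix, tame, Matrix.mul_apply, Fin.sum_univ_four]
  ring

lemma nu_mul (a b : Fˣ) : D.nu (a * b) = D.nu a + D.nu b := by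
  simp [nu, D.v_mul]

variable [Fintype K]

lemma exists_eq_mul_mul_self_of_not_isSquare_rs (hK : ringChar K ≠ 2) {u : Fˣ} (hu0 : D.v u = 0)
    (hu : ¬IsSquare (D.rs u)) {w : Fˣ} (hw : D.v w = 0) (hsq : ¬IsSquare (D.rs w)) :
    ∃ s, w = u * (s * s) := by
  obtain ⟨t, ht⟩ := D.isSquare_of_isSquare_rs hK (w := u * w) (by rw [D.v_mul, hu0, hw, add_zero])
    (by
      rw [Units.val_mul, D.rs_mul (D.coe_mem_O hu0) (D.coe_mem_O hw),
        FiniteField.isSquare_mul_iff (D.rs_ne_zero hu0) (D.rs_ne_zero hw)]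
      exact iff_of_false hu hsq)
  refine ⟨t * u⁻¹, Units.ext ?_⟩
  have ht' := congrArg Units.val ht
  push_cast at ht' ⊢
  field_simp
  linear_combination ht'

lemma eps_mul (hπ : D.v π = 1) (a b : Fˣ) : D.eps π (a * b) = D.eps π a + D.eps π b := by
  have hO (x : Fˣ) := D.coe_mem_O (D.v_unitPart hπ x)
  have hsq := FiniteField.isSquare_mul_iff (D.rs_ne_zero (D.v_unitPart hπ a))
    (D.rs_ne_zero (D.v_unitPart hπ b))
  rw [← D.rs_mul (hO a) (hO b), ← Units.val_mul, ← unitPart_mul] at hsq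
  unfold eps
  split_ifs <;> simp_all; rfl

lemma nu_eps_of_isSquare (hπ : D.v π = 1) {b : Fˣ} (hb : IsSquare b) :
    D.nu b = 0 ∧ D.eps π b = 0 := by
  obtain ⟨s, rfl⟩ := hb
  rw [D.nu_mul, D.eps_mul hπ, CharTwo.add_self_eq_zero, CharTwo.add_self_eq_zero]
  exact ⟨rfl, rfl⟩

lemma nu_eps_of_add_eq_one_of_one_le_v (hK : ringChar K ≠ 2) (hπ : D.v π = 1) {x y : Fˣ}
    (hxy : (x : F) + y = 1) (hy : 1 ≤ D.v y) : D.nu x = 0 ∧ D.eps π x = 0 := by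
  refine D.nu_eps_of_isSquare hπ (Units.isSquare_of_isSquare_val
    (D.isSquare_of_one_le_val_sub_one hK ?_))
  rw [← hxy, sub_add_cancel_left, D.val.map_neg, D.val_units]
  exact_mod_cast hy

lemma nu_eps_of_add_eq_one_of_v_neg (hK : ringChar K ≠ 2) (hπ : D.v π = 1) {a b : Fˣ}
    (hab : (a : F) + b = 1) (ha : D.v a < 0) :
    D.nu b = D.nu a ∧ D.eps π b = D.eps π (-1) + D.eps π a := by
  have hc : (1 : F) - (a⁻¹ : Fˣ) ≠ 0 := sub_ne_zero.2 fun h => by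
    rw [inv_eq_one.1 (Units.val_eq_one.1 h.symm), D.v_one] at ha
    exact ha.false
  obtain ⟨hnuc, hepsc⟩ := D.nu_eps_of_add_eq_one_of_one_le_v hK hπ (x := Units.mk0 _ hc)
    (y := a⁻¹) (by simp) (by rw [D.v_inv]; omega)
  have hb : b = -1 * a * Units.mk0 _ hc := by
    have := a.ne_zero
    ext
    simp only [Units.val_mul, Units.val_neg, Units.val_one, Units.val_mk0,
      Units.val_inv_eq_inv_val]
    field_simp
    linear_combination hab
  rw [hb, D.nu_mul, D.nu_mul, D.eps_mul hπ, D.eps_mul hπ, hnuc, hepsc, nu, D.v_neg_one]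
  simp

lemma tame_eq_zero_of_add_eq_one (hK : ringChar K ≠ 2) (hπ : D.v π = 1) {a b : Fˣ}
    (hab : (a : F) + b = 1) : D.tame π a b = 0 := by
  rcases lt_trichotomy (D.v a) 0 with ha | ha | ha
  · obtain ⟨hnub, hepsb⟩ := D.nu_eps_of_add_eq_one_of_v_neg hK hπ hab ha
    rw [tame, hnub, hepsb]
    -- in `ZMod 2`, `x * x = x`
    generalize D.nu a = x; generalize D.eps π a = y; generalize D.eps π (-1) = z
    revert x y z; decide
  · have hnua : D.nu a = 0 := by simp [nu, ha]
    have hvb : 0 ≤ D.v b := by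
      have h : (0 : WithTop ℤ) ≤ D.val (1 - a) :=
        D.val.map_le_sub (by simp) (by simp [D.val_units, ha])
      rwa [← hab, add_sub_cancel_left, D.val_units, WithTop.coe_nonneg] at h
    rcases hvb.eq_or_lt with hvb | hvb
    · simp [tame, hnua, show D.nu b = 0 by simp [nu, ← hvb]]
    · simp [tame, hnua, (D.nu_eps_of_add_eq_one_of_one_le_v hK hπ hab hvb).2]
  · obtain ⟨hnub, hepsb⟩ := D.nu_eps_of_add_eq_one_of_one_le_v hK hπ (x := b) (by rwa [add_comm]) ha
    simp [tame, hnub, hepsb]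

noncomputable def symbolMatrixHom (hπ : D.v π = 1) :
    Additive Fˣ →+ Matrix (Fin 4) (Fin 4) (ZMod 2) :=
  AddMonoidHom.mk' (fun a => D.symbolMatrix π a.toMul) fun a b => by
    ext i j
    fin_cases i <;> fin_cases j <;> simp [symbolMatrix, D.nu_mul, D.eps_mul hπ]
    ring

noncomputable def tameHom (hK : ringChar K ≠ 2) (hπ : D.v π = 1) :
    MilnorK F →+* Matrix (Fin 4) (Fin 4) (ZMod 2) :=
  MilnorK.lift (D.symbolMatrixHom hπ) CharTwo.two_eq_zero fun a b hab => by
    simp [symbolMatrixHom, D.symbolMatrix_mul, D.tame_eq_zero_of_add_eq_one hK hπ hab]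

variable {u : Fˣ}

lemma kcls_mul_kcls_ne_zero (hK : ringChar K ≠ 2) (hπ : D.v π = 1) (hu0 : D.v u = 0)
    (hu : ¬IsSquare (D.rs u)) : kcls u * kcls π ≠ 0 := by
  have hepsπ : D.eps π π = 0 := by
    have : D.unitPart π π = 1 := by rw [unitPart, hπ, zpow_neg_one, mul_inv_cancel]
    simp [eps, this, D.rs_one]
  have hepsu : D.eps π u = 1 := by simp [eps, D.unitPart_of_v_eq_zero hu0, hu]
  have htame : D.tame π u π = 1 := by simp [tame, nu, hu0, hπ, hepsπ, hepsu]
  intro h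
  have h' := congrArg (fun z => D.tameHom hK hπ z 0 3) h
  simp [tameHom, MilnorK.lift_kcls, symbolMatrixHom, D.symbolMatrix_mul, htame] at h'

lemma kcls_eq_zsmul_of_v_eq_zero (hK : ringChar K ≠ 2) (hu0 : D.v u = 0)
    (hu : ¬IsSquare (D.rs u)) {w : Fˣ} (hw : D.v w = 0) : ∃ m : ℤ, kcls w = m • kcls u := by
  by_cases hsq : IsSquare (D.rs w)
  · obtain ⟨s, rfl⟩ := D.isSquare_of_isSquare_rs hK hw hsq
    exact ⟨0, by rw [kcls_mul_self, zero_zsmul]⟩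
  · obtain ⟨s, rfl⟩ := D.exists_eq_mul_mul_self_of_not_isSquare_rs hK hu0 hu hw hsq
    exact ⟨1, by rw [kcls_mul, kcls_mul_self, add_zero, one_zsmul]⟩

lemma exists_kcls_eq_zsmul_add_zsmul (hK : ringChar K ≠ 2) (hπ : D.v π = 1) (hu0 : D.v u = 0)
    (hu : ¬IsSquare (D.rs u)) (a : Fˣ) : ∃ m n : ℤ, kcls a = m • kcls u + n • kcls π := by
  obtain ⟨m, hm⟩ := D.kcls_eq_zsmul_of_v_eq_zero hK hu0 hu (D.v_unitPart hπ a)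
  refine ⟨m, D.v a, ?_⟩
  rw [← hm, ← kcls_zpow, ← kcls_mul, unitPart, mul_assoc, ← zpow_add, neg_add_cancel, zpow_zero,
    mul_one]

lemma kcls_mul_kcls_pi_mem_zmultiples (hK : ringChar K ≠ 2) (hu0 : D.v u = 0)
    (hu : ¬IsSquare (D.rs u)) : kcls π * kcls π ∈ AddSubgroup.zmultiples (kcls u * kcls π) := by
  obtain ⟨m, hm⟩ := D.kcls_eq_zsmul_of_v_eq_zero hK hu0 hu D.v_neg_one
  exact ⟨m, by rw [kcls_mul_kcls_self, hm, mul_smul_comm, kcls_mul_comm]⟩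

lemma kcls_mul_kcls_self_eq_zero (hK : ringChar K ≠ 2) (hu0 : D.v u = 0)
    (hu : ¬IsSquare (D.rs u)) : kcls u * kcls u = 0 := by
  have hc := D.rs_ne_zero hu0
  obtain ⟨x, y, hx, hy, hsum⟩ := FiniteField.exists_mul_sq_add_mul_sq_eq_one hK hu
  -- lift `1 = u x² + u y²` to `1 = A + B` with `A = u t²` and `B ∈ u F^{×2}`
  obtain ⟨t, htv, htx⟩ := D.exists_v_eq_zero_rs_eq hx
  set A : Fˣ := u * (t * t)
  have htO := D.coe_mem_O htv
  have hAO : (A : F) ∈ D.O := D.coe_mem_O (by simp [A, D.v_mul, hu0, htv])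
  have hrsB : D.rs (1 - A) = D.rs u * y ^ 2 := by
    rw [D.rs_sub (one_mem _) hAO, D.rs_one, Units.val_mul, Units.val_mul,
      D.rs_mul (D.coe_mem_O hu0) (mul_mem htO htO), D.rs_mul htO htO, htx]
    linear_combination -hsum
  have hvB : D.val (1 - A) = 0 := (D.val_eq_zero_iff_rs_ne_zero (sub_mem (one_mem _) hAO)).2
    (by rw [hrsB]; exact mul_ne_zero hc (pow_ne_zero 2 hy))
  have hB : (1 : F) - A ≠ 0 := by rintro h; simp [h] at hvB
  have hnsq : ¬IsSquare (D.rs (Units.mk0 _ hB)) := by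
    rw [Units.val_mk0, hrsB, FiniteField.isSquare_mul_iff hc (pow_ne_zero 2 hy)]
    exact fun h => hu (h.2 (IsSquare.sq y))
  obtain ⟨s, hs⟩ := D.exists_eq_mul_mul_self_of_not_isSquare_rs hK hu0 hu
    (D.val_units_eq_zero_iff.1 (by simpa using hvB)) hnsq
  have := kcls_mul_kcls_eq_zero_of_add_eq_one (a := A) (b := Units.mk0 _ hB) (by simp)
  rwa [hs, kcls_mul, kcls_mul_self, add_zero, kcls_mul, kcls_mul_self, add_zero] at this

end PadicData

theorem milnor_deg_two_general {F K : Type} [Field F] [Field K] [Fintype K]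
    (D : PadicData F K) (hodd : Odd (Fintype.card K))
    (π : Fˣ) (hπ : D.v π = 1)
    (u : Fˣ) (hu0 : D.v u = 0) (humem : (u : F) ∈ D.O)
    (hu : ¬ ∃ b : K, b * b = D.res ⟨(u : F), humem⟩) :
    (∀ a b : Fˣ, kcls a * kcls b = 0 ∨ kcls a * kcls b = kcls u * kcls π) ∧
    kcls u * kcls π ≠ 0 ∧
    {z : MilnorK F | ∃ a b : Fˣ, z = kcls a * kcls b} = {0, kcls u * kcls π} ∧
    Nat.card (AddSubgroup.closure {z : MilnorK F | ∃ a b : Fˣ, z = kcls a * kcls b}) = 2 := by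
  have hK := FiniteField.ringChar_ne_two_of_odd_card hodd
  have hu' : ¬IsSquare (D.rs u) := by
    rw [D.rs_of_mem humem]
    exact fun ⟨r, hr⟩ => hu ⟨r, hr.symm⟩
  have hT := D.kcls_mul_kcls_ne_zero hK hπ hu0 hu'
  have hT2 : 2 • (kcls u * kcls π) = 0 := by rw [two_nsmul, MilnorK.add_self]
  have hpair := AddSubgroup.coe_zmultiples_of_two_nsmul_eq_zero hT2
  have hprod (a b : Fˣ) : kcls a * kcls b ∈ ({0, kcls u * kcls π} : Set (MilnorK F)) := by
    obtain ⟨m, n, ha⟩ := D.exists_kcls_eq_zsmul_add_zsmul hK hπ hu0 hu' a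
    obtain ⟨m', n', hb⟩ := D.exists_kcls_eq_zsmul_add_zsmul hK hπ hu0 hu' b
    rw [← hpair, ha, hb]
    exact zsmul_add_zsmul_mul_mem_zmultiples (D.kcls_mul_kcls_self_eq_zero hK hu0 hu')
      (kcls_mul_comm π u) (D.kcls_mul_kcls_pi_mem_zmultiples hK hu0 hu') m n m' n'
  have hset : {z : MilnorK F | ∃ a b : Fˣ, z = kcls a * kcls b} = {0, kcls u * kcls π} := by
    refine subset_antisymm (fun z ⟨a, b, hz⟩ => hz ▸ hprod a b) ?_
    rintro z (rfl | rfl)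
    exacts [⟨1, 1, by rw [kcls_one, zero_mul]⟩, ⟨u, π, rfl⟩]
  refine ⟨hprod, hT, hset, ?_⟩
  rw [hset, ← hpair, AddSubgroup.closure_eq, Nat.card_zmultiples, addOrderOf_eq_prime hT2 hT]

/-- every product `{a}·{b}` equals `0` or `{u}·{π}`; with `{u}·{π} ≠ 0`,
the second Milnor K-group (the additive group generated by such products) has exactly
two elements. -/
theorem milnor_deg_two {F K : Type} [Field F] [CharZero F] [Field K] [Fintype K]
    (D : PadicData F K) (hodd : Odd (Fintype.card K))
    (π : Fˣ) (hπ : D.v π = 1)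
    (u : Fˣ) (hu0 : D.v u = 0) (humem : (u : F) ∈ D.O)
    (hu : ¬ ∃ b : K, b * b = D.res ⟨(u : F), humem⟩) :
    (∀ a b : Fˣ, kcls a * kcls b = 0 ∨ kcls a * kcls b = kcls u * kcls π) ∧
    kcls u * kcls π ≠ 0 ∧
    {z : MilnorK F | ∃ a b : Fˣ, z = kcls a * kcls b} = {0, kcls u * kcls π} ∧
    Nat.card (AddSubgroup.closure {z : MilnorK F | ∃ a b : Fˣ, z = kcls a * kcls b}) = 2 :=
  milnor_deg_two_general D hodd π hπ u hu0 humem hu
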